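/- Let μ ∈ ℝ and 0 < ρ < 1, set γ = √(1−ρ²), let ν(x) = e^{−x²/2}/√(2π), and define the functions Q_N : ℝ → ℝ recursively by Q_0 ≡ 1 and Q_{N+1}(x) = (μ+x) ∫_ℝ Q_N(ρx + γy) ν(y) dy. Define T_N : ℝ → ℝ by T_N(t) := e^{−t²/2} ∫_ℝ Q_N(x) e^{tx} ν(x) dx. Then each T_N is differentiable and satisfies the recurrence T_{N+1}(t) = (μ+t)·T_N(ρt) + ρ·T_N'(ρt) for all t ∈ ℝ and all N ≥ 0. -/

import Mathlib

/-!
By the Cameron–Martin shift, `T_N(t) = E[Q_N(X + t)]` for a standard normal `X`, and each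
`Q_N` is a polynomial. On polynomials the Gaussian smoothing `(G_c p)(a) = E[p(a + cY)]` is
again a polynomial, commutes with differentiation, and `E[(G_γ p)(a + ρX)] = (G_1 p)(a)`
because `ρX + γY` is standard normal when `ρ² + γ² = 1`. Since
`Q_{N+1}(x) = (μ + x) (G_γ Q_N)(ρx)`, with `h = G_γ Q_N` we get
`T_{N+1}(t) = (μ + t) E[h(ρt + ρX)] + E[X h(ρt + ρX)]`; the first term is `(μ + t) T_N(ρt)`,
and Stein's identity `E[X f(X)] = E[f'(X)]` turns the second into
`ρ E[(G_γ Q_N')(ρt + ρX)] = ρ T_N'(ρt)`.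
-/

open MeasureTheory ProbabilityTheory Polynomial Real

lemma gaussianPDFReal_zero_one :
    gaussianPDFReal 0 1 = fun x => (√(2 * π))⁻¹ * rexp (-x ^ 2 / 2) := by
  ext x; simp [gaussianPDFReal]

lemma hasDerivAt_gaussianPDFReal_zero_one (x : ℝ) :
    HasDerivAt (gaussianPDFReal 0 1) (-(x * gaussianPDFReal 0 1 x)) x := by
  have hq : HasDerivAt (fun y : ℝ => -y ^ 2 / 2) (-x) x :=
    ((hasDerivAt_pow 2 x).neg.div_const 2).congr_deriv (by norm_num; ring)
  rw [gaussianPDFReal_zero_one]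
  exact (hq.exp.const_mul _).congr_deriv (by ring)

lemma integrable_gaussianReal_iff {f : ℝ → ℝ} :
    Integrable f (gaussianReal 0 1) ↔ Integrable (fun x => gaussianPDFReal 0 1 x * f x) := by
  rw [gaussianReal_of_var_ne_zero 0 one_ne_zero,
    integrable_withDensity_iff_integrable_smul' (measurable_gaussianPDF 0 1)
      (ae_of_all _ fun _ => gaussianPDF_lt_top)]
  simp

lemma integrable_pow_gaussianReal (n : ℕ) :
    Integrable (fun x : ℝ => x ^ n) (gaussianReal 0 1) :=
  (memLp_id_gaussianReal n).integrable_norm_pow'.mono' (by fun_prop)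
    (ae_of_all _ fun x => by simp [norm_pow])

lemma integral_comp_add_right_gaussianReal (f : ℝ → ℝ) (t : ℝ) :
    ∫ x, f (x + t) ∂gaussianReal 0 1
      = rexp (-t ^ 2 / 2) * ∫ x, f x * rexp (t * x) ∂gaussianReal 0 1 := by
  simp only [integral_gaussianReal_eq_integral_smul one_ne_zero, smul_eq_mul,
    gaussianPDFReal_zero_one]
  rw [← integral_const_mul]
  conv_rhs => rw [← integral_add_right_eq_self _ t]
  congr 1; ext x
  have hexp : rexp (-t ^ 2 / 2) * rexp (-(x + t) ^ 2 / 2) * rexp (t * (x + t))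
      = rexp (-x ^ 2 / 2) := by
    rw [← exp_add, ← exp_add]; ring_nf
  rw [← hexp]; ring

/-- Stein's identity, by integrating by parts against `φ' = -x φ`. -/
theorem integral_mul_gaussianReal_eq_integral_deriv {f f' : ℝ → ℝ}
    (hf : ∀ x, HasDerivAt f (f' x) x) (hf_int : Integrable f (gaussianReal 0 1))
    (hf'_int : Integrable f' (gaussianReal 0 1))
    (hxf_int : Integrable (fun x => x * f x) (gaussianReal 0 1)) :
    ∫ x, x * f x ∂gaussianReal 0 1 = ∫ x, f' x ∂gaussianReal 0 1 := by
  rw [integrable_gaussianReal_iff] at hf_int hf'_int hxf_int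
  simp only [integral_gaussianReal_eq_integral_smul one_ne_zero, smul_eq_mul]
  have hibp := integral_mul_deriv_eq_deriv_mul_of_integrable (u := f) (u' := f')
    (v := fun x => -gaussianPDFReal 0 1 x) (v' := fun x => x * gaussianPDFReal 0 1 x)
    (fun x _ => hf x)
    (fun x _ => (hasDerivAt_gaussianPDFReal_zero_one x).neg.congr_deriv (neg_neg _))
    (hxf_int.congr (ae_of_all _ fun x => by simp only [Pi.mul_apply]; ring))
    (hf'_int.neg.congr (ae_of_all _ fun x => by simp only [Pi.mul_apply, Pi.neg_apply]; ring))
    (hf_int.neg.congr (ae_of_all _ fun x => by simp only [Pi.mul_apply, Pi.neg_apply]; ring))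
  simp only [mul_neg, integral_neg, neg_neg] at hibp
  calc ∫ x, gaussianPDFReal 0 1 x * (x * f x) = ∫ x, f x * (x * gaussianPDFReal 0 1 x) := by
        congr 1; ext x; ring
    _ = ∫ x, gaussianPDFReal 0 1 x * f' x := by rw [hibp]; congr 1; ext x; ring

lemma map_prod_gaussianReal_linear {ρ γ : ℝ} (h : ρ ^ 2 + γ ^ 2 = 1) :
    ((gaussianReal 0 1).prod (gaussianReal 0 1)).map (fun p : ℝ × ℝ => ρ * p.1 + γ * p.2)
      = gaussianReal 0 1 := by
  calc ((gaussianReal 0 1).prod (gaussianReal 0 1)).map (fun p : ℝ × ℝ => ρ * p.1 + γ * p.2)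
      = (gaussianReal 0 1).map (ρ * ·) ∗ (gaussianReal 0 1).map (γ * ·) := by
        rw [Measure.conv, Measure.map_prod_map _ _ (by fun_prop) (by fun_prop),
          Measure.map_map (by fun_prop) (by fun_prop)]
        rfl
    _ = gaussianReal 0 1 := by
        rw [gaussianReal_map_const_mul, gaussianReal_map_const_mul,
          gaussianReal_conv_gaussianReal]
        congr 1
        · simp
        · ext; simp [h]

lemma integral_integral_gaussianReal_comp {ρ γ : ℝ} (h : ρ ^ 2 + γ ^ 2 = 1) {f : ℝ → ℝ}
    (hf : Integrable f (gaussianReal 0 1)) :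
    ∫ x, ∫ y, f (ρ * x + γ * y) ∂gaussianReal 0 1 ∂gaussianReal 0 1
      = ∫ z, f z ∂gaussianReal 0 1 := by
  have hL : Measurable fun p : ℝ × ℝ => ρ * p.1 + γ * p.2 := by fun_prop
  rw [← map_prod_gaussianReal_linear h] at hf
  have hint : Integrable (Function.uncurry fun x y => f (ρ * x + γ * y))
      ((gaussianReal 0 1).prod (gaussianReal 0 1)) :=
    (integrable_map_measure hf.aestronglyMeasurable hL.aemeasurable).mp hf
  rw [integral_integral hint]
  calc _ = ∫ z, f z ∂((gaussianReal 0 1).prod (gaussianReal 0 1)).map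
        (fun p : ℝ × ℝ => ρ * p.1 + γ * p.2) :=
        (integral_map hL.aemeasurable hf.aestronglyMeasurable).symm
    _ = _ := by rw [map_prod_gaussianReal_linear h]

namespace Polynomial

lemma integrable_eval_gaussianReal (p : ℝ[X]) :
    Integrable (fun x => p.eval x) (gaussianReal 0 1) := by
  induction p using Polynomial.induction_on' with
  | add p q hp hq =>
    simp only [eval_add]
    exact hp.add hq
  | monomial n c => simpa using (integrable_pow_gaussianReal n).const_mul c

lemma integral_mul_eval_gaussianReal (p : ℝ[X]) :
    ∫ x, x * p.eval x ∂gaussianReal 0 1 = ∫ x, (derivative p).eval x ∂gaussianReal 0 1 :=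
  integral_mul_gaussianReal_eq_integral_deriv (fun x => p.hasDerivAt x)
    p.integrable_eval_gaussianReal (derivative p).integrable_eval_gaussianReal
    ((X * p).integrable_eval_gaussianReal.congr (ae_of_all _ fun x => by simp))

lemma hasseDeriv_derivative {R : Type*} [Semiring R] (k : ℕ) (p : R[X]) :
    hasseDeriv k (derivative p) = derivative (hasseDeriv k p) := by
  rw [← hasseDeriv_one', ← hasseDeriv_one']
  have h1 := LinearMap.congr_fun (hasseDeriv_comp (R := R) 1 k) p
  have h2 := LinearMap.congr_fun (hasseDeriv_comp (R := R) k 1) p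
  simp only [LinearMap.comp_apply] at h1 h2
  rw [h1, h2, Nat.choose_one_right, Nat.choose_succ_self_right, Nat.add_comm 1 k]

/-- The polynomial `a ↦ E[p(a + cY)]`, `Y` standard normal: in the Taylor expansion of
`p(a + cy)` the `k`-th Hasse derivative is weighted by the `k`-th moment of `cY`. -/
noncomputable def gaussianSmoothing (c : ℝ) (p : ℝ[X]) : ℝ[X] :=
  ∑ k ∈ Finset.range (p.natDegree + 1),
    C (c ^ k * ∫ y, y ^ k ∂gaussianReal 0 1) * hasseDeriv k p

lemma gaussianSmoothing_eq_sum (c : ℝ) {p : ℝ[X]} {M : ℕ} (hM : p.natDegree < M) :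
    gaussianSmoothing c p = ∑ k ∈ Finset.range M,
      C (c ^ k * ∫ y, y ^ k ∂gaussianReal 0 1) * hasseDeriv k p := by
  refine Finset.sum_subset (Finset.range_subset_range.mpr hM) fun k _ hk => ?_
  rw [hasseDeriv_eq_zero_of_lt_natDegree p k (by simpa using hk), mul_zero]

lemma eval_gaussianSmoothing (c a : ℝ) (p : ℝ[X]) :
    (gaussianSmoothing c p).eval a = ∫ y, p.eval (a + c * y) ∂gaussianReal 0 1 := by
  have htaylor : ∀ y, p.eval (a + c * y) = ∑ k ∈ Finset.range (p.natDegree + 1),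
      (hasseDeriv k p).eval a * c ^ k * y ^ k := fun y => by
    rw [add_comm, ← taylor_eval, eval_eq_sum_range, natDegree_taylor]
    simp_rw [taylor_coeff, mul_pow, mul_assoc]
  simp_rw [htaylor, gaussianSmoothing, eval_finsetSum, eval_mul, eval_C]
  rw [integral_finsetSum _ fun k _ => (integrable_pow_gaussianReal k).const_mul _]
  simp_rw [integral_const_mul]
  exact Finset.sum_congr rfl fun k _ => by ring

lemma derivative_gaussianSmoothing (c : ℝ) (p : ℝ[X]) :
    derivative (gaussianSmoothing c p) = gaussianSmoothing c (derivative p) := by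
  rw [gaussianSmoothing_eq_sum c (M := p.natDegree + 1)
    ((natDegree_derivative_le p).trans_lt (by omega)), gaussianSmoothing, derivative_sum]
  simp_rw [derivative_C_mul, hasseDeriv_derivative]

section
variable {ρ γ : ℝ}

lemma integral_eval_gaussianSmoothing (h : ρ ^ 2 + γ ^ 2 = 1) (p : ℝ[X]) (a : ℝ) :
    ∫ x, (gaussianSmoothing γ p).eval (a + ρ * x) ∂gaussianReal 0 1
      = (gaussianSmoothing 1 p).eval a := by
  simp_rw [eval_gaussianSmoothing, one_mul, add_assoc]
  exact integral_integral_gaussianReal_comp (f := fun z => p.eval (a + z)) h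
    ((p.comp (C a + X)).integrable_eval_gaussianReal.congr (ae_of_all _ fun z => by simp))

lemma integral_mul_eval_gaussianSmoothing (h : ρ ^ 2 + γ ^ 2 = 1) (p : ℝ[X]) (μ t : ℝ) :
    ∫ x, (μ + (x + t)) * (gaussianSmoothing γ p).eval (ρ * (x + t)) ∂gaussianReal 0 1
      = (μ + t) * (gaussianSmoothing 1 p).eval (ρ * t)
        + ρ * (derivative (gaussianSmoothing 1 p)).eval (ρ * t) := by
  set r := (gaussianSmoothing γ p).comp (C (ρ * t) + C ρ * X)
  have hr : ∀ x, r.eval x = (gaussianSmoothing γ p).eval (ρ * t + ρ * x) := fun x => by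
    simp only [r, eval_comp, eval_add, eval_mul, eval_C, eval_X]
  have hr' : ∀ x, (derivative r).eval x
      = ρ * (gaussianSmoothing γ (derivative p)).eval (ρ * t + ρ * x) := fun x => by
    simp [r, derivative_comp, derivative_gaussianSmoothing]
  calc ∫ x, (μ + (x + t)) * (gaussianSmoothing γ p).eval (ρ * (x + t)) ∂gaussianReal 0 1
      = ∫ x, (μ + t) * r.eval x + x * r.eval x ∂gaussianReal 0 1 := by
        congr 1; ext x; rw [hr, mul_add ρ x t, add_comm (ρ * x)]; ring
    _ = (μ + t) * ∫ x, r.eval x ∂gaussianReal 0 1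
          + ∫ x, (derivative r).eval x ∂gaussianReal 0 1 := by
        rw [integral_add (r.integrable_eval_gaussianReal.const_mul _)
          ((X * r).integrable_eval_gaussianReal.congr (ae_of_all _ fun x => by simp)),
          integral_const_mul, integral_mul_eval_gaussianReal]
    _ = _ := by
        simp_rw [hr', hr, integral_const_mul, integral_eval_gaussianSmoothing h,
          derivative_gaussianSmoothing]

end

end Polynomial

lemma exists_eval_eq_of_recursion {μ ρ γ : ℝ} {Q : ℕ → ℝ → ℝ} (hQ0 : ∀ x, Q 0 x = 1)
    (hQ : ∀ N x, Q (N + 1) x = (μ + x) * ∫ y, Q N (ρ * x + γ * y) ∂gaussianReal 0 1)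
    (N : ℕ) : ∃ p : ℝ[X], Q N = fun x => p.eval x := by
  induction N with
  | zero => exact ⟨1, funext fun x => by simp [hQ0]⟩
  | succ N ih =>
    obtain ⟨p, hp⟩ := ih
    refine ⟨(C μ + X) * (gaussianSmoothing γ p).comp (C ρ * X), funext fun x => ?_⟩
    simp [hQ, hp, eval_gaussianSmoothing]

/-- The generating functions
`T_N(t) = e^{-t²/2} ∫ Q_N(x) e^{tx} dN(0,1)(x)` of the Hermite–Fourier coefficients
of the conditional product moments `Q_N` are differentiable and satisfy the
pantograph-type recurrence `T_{N+1}(t) = (μ+t) T_N(ρt) + ρ T_N'(ρt)`. -/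
theorem generating_function_recurrence
    (μ ρ : ℝ) (hρ0 : 0 < ρ) (hρ1 : ρ < 1)
    (γ : ℝ) (hγ : γ = Real.sqrt (1 - ρ ^ 2))
    (Q : ℕ → ℝ → ℝ) (hQ0 : ∀ x, Q 0 x = 1)
    (hQ : ∀ N x, Q (N + 1) x
      = (μ + x) * ∫ y, Q N (ρ * x + γ * y) ∂(gaussianReal 0 1))
    (T : ℕ → ℝ → ℝ)
    (hT : ∀ N t, T N t
      = Real.exp (-t ^ 2 / 2) * ∫ x, Q N x * Real.exp (t * x) ∂(gaussianReal 0 1)) :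
    (∀ N, Differentiable ℝ (T N)) ∧
    ∀ N t, T (N + 1) t = (μ + t) * T N (ρ * t) + ρ * deriv (T N) (ρ * t) := by
  have hργ : ρ ^ 2 + γ ^ 2 = 1 := by
    rw [hγ, sq_sqrt (by nlinarith)]; ring
  have hT_shift : ∀ N t, T N t = ∫ x, Q N (x + t) ∂gaussianReal 0 1 := fun N t => by
    rw [hT, integral_comp_add_right_gaussianReal]
  choose P hP using exists_eval_eq_of_recursion hQ0 hQ
  have hTP : ∀ N, T N = fun t => (gaussianSmoothing 1 (P N)).eval t := fun N => by
    funext t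
    simp_rw [hT_shift, hP, eval_gaussianSmoothing, one_mul, add_comm]
  refine ⟨fun N => hTP N ▸ (gaussianSmoothing 1 (P N)).differentiable, fun N t => ?_⟩
  rw [hT_shift, hTP N, Polynomial.deriv]
  simp_rw [hQ, hP N, ← eval_gaussianSmoothing]
  exact integral_mul_eval_gaussianSmoothing hργ (P N) μ t
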